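/- arXiv:1804.03651 — 7 statements merged into one kernel-verified Lean document; each statement's English description precedes it below -/
import Mathlib

section
/- Let Ω be a nonempty set. A function d: Ω × Ω × Ω → ℝ₊ is a g-metric with order 2 on Ω if and only if d is a G-metric on Ω. -/
open scoped Classical

/-- A *g-metric with order `n`* on `Ω`: a nonnegative real-valued function of `n+1` points
satisfying positive definiteness, permutation invariance, monotonicity, and the
generalized triangle inequality. -/
structure IsGMetric {Ω : Type*} (n : ℕ) (g : (Fin (n + 1) → Ω) → ℝ) : Prop where
  nonneg : ∀ x, 0 ≤ g x
  eq_zero_iff : ∀ x, g x = 0 ↔ ∀ i j, x i = x j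
  perm_inv : ∀ (x : Fin (n + 1) → Ω) (σ : Equiv.Perm (Fin (n + 1))), g (x ∘ σ) = g x
  mono : ∀ x y : Fin (n + 1) → Ω, Set.range x ⊂ Set.range y → g x ≤ g y
  triangle : ∀ s : ℕ, s < n → ∀ (x y : Fin (n + 1) → Ω) (w : Ω),
    g (fun i => if i.val ≤ s then x i else y i) ≤
      g (fun i => if i.val ≤ s then x i else w) + g (fun i => if i.val ≤ s then w else y i)

/-- A G-metric on  in the sense of Mustafa and Sims. -/
def IsGMetricMS {Ω : Type*} (G : Ω → Ω → Ω → ℝ) : Prop :=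
  (∀ x, G x x x = 0) ∧
  (∀ x y, x ≠ y → 0 < G x x y) ∧
  (∀ x y z, y ≠ z → G x x y ≤ G x y z) ∧
  (∀ x y z, G x y z = G x z y ∧ G x y z = G y x z ∧ G x y z = G y z x ∧
    G x y z = G z x y ∧ G x y z = G z y x) ∧
  (∀ x y z w, G x y z ≤ G x w w + G w y z)

/-- A function of three points is a g-metric with order 2 if and only if it is a G-metric. -/
theorem gMetric_order_two_iff_GMetric {Ω : Type*} [Nonempty Ω] (G : Ω → Ω → Ω → ℝ)
    (hG : ∀ x y z, 0 ≤ G x y z) :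
    IsGMetric 2 (fun x : Fin 3 → Ω => G (x 0) (x 1) (x 2)) ↔ IsGMetricMS G := by
  constructor
  · rintro ⟨hnn, hz, hperm, hmono, htri⟩
    have hsw12 : ∀ x y z, G x y z = G x z y := by
      intro x y z
      have := hperm ![x,z,y] (Equiv.swap 1 2)
      simpa [Function.comp, Equiv.swap_apply_def] using this
    have hsw01 : ∀ x y z, G x y z = G y x z := by
      intro x y z
      have := hperm ![y,x,z] (Equiv.swap 0 1)
      simpa [Function.comp, Equiv.swap_apply_def] using this
    have hsym : ∀ x y z, G x y z = G x z y ∧ G x y z = G y x z ∧ G x y z = G y z x ∧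
        G x y z = G z x y ∧ G x y z = G z y x := by
      intro x y z
      refine ⟨hsw12 x y z, hsw01 x y z, ?_, ?_, ?_⟩
      · rw [hsw01, hsw12]
      · rw [hsw12, hsw01]
      · rw [hsw12, hsw01, hsw12]
    have hdiag : ∀ x, G x x x = 0 := by
      intro x
      exact (hz (fun _ => x)).mpr (fun i j => rfl)
    have hpos : ∀ x y, x ≠ y → 0 < G x x y := by
      intro x y hxy
      have h0 : (0:ℝ) ≤ G x x y := hG x x y
      rcases h0.lt_or_eq with h | h
      · exact h
      · exfalso
        have h' : G (![x,x,y] 0) (![x,x,y] 1) (![x,x,y] 2) = 0 := by simpa using h.symm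
        have := (hz ![x,x,y]).mp h' 0 2
        simp at this
        exact hxy this
    refine ⟨hdiag, hpos, ?_, hsym, ?_⟩
    · intro x y z hyz
      by_cases hxy : x = y
      · subst hxy; rw [hdiag]; exact hG x x z
      by_cases hxz : x = z
      · subst hxz
        exact le_of_eq (hsym x x y).1
      · have hss : Set.range ![x,x,y] ⊂ Set.range ![x,y,z] := by
          constructor
          · rintro _ ⟨i, rfl⟩
            fin_cases i
            · exact ⟨0, rfl⟩
            · exact ⟨0, rfl⟩
            · exact ⟨1, rfl⟩
          · intro hrev
            obtain ⟨i, hi⟩ := hrev ⟨2, rfl⟩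
            fin_cases i <;> simp at hi
            · exact hxz hi
            · exact hxz hi
            · exact hyz hi
        have := hmono ![x,x,y] ![x,y,z] hss
        simpa using this
    · intro x y z w
      have := htri 0 (by norm_num) ![x,y,z] ![x,y,z] w
      simpa using this
  · rintro ⟨h1, h2, h3, h4, h5⟩
    have hpos : ∀ a b c : Ω, (a ≠ b ∨ b ≠ c ∨ a ≠ c) → 0 < G a b c := by
      intro a b c h
      by_cases hbc : b = c
      · have hab : a ≠ b := by
          rcases h with h | h | h
          · exact h
          · exact absurd hbc h
          · exact fun e => h (e.trans hbc)
        calc (0:ℝ) < G b b a := h2 b a (fun e => hab e.symm)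
          _ = G b a b := (h4 b b a).1
          _ = G a b b := (h4 b a b).2.1
          _ = G a b c := by rw [hbc]
      · by_cases hca : c = a
        · have hab : a ≠ b := fun e => hbc (e.symm.trans hca.symm)
          calc (0:ℝ) < G a a b := h2 a b hab
            _ = G a b a := (h4 a a b).1
            _ = G a b c := by rw [hca]
        · calc (0:ℝ) < G b b c := h2 b c hbc
            _ ≤ G b c a := h3 b c a hca
            _ = G a b c := (h4 b c a).2.2.2.1
    have hidx : ∀ (x : Fin 3 → Ω) (i j k : Fin 3), i ≠ j → i ≠ k → j ≠ k →
        G (x i) (x j) (x k) = G (x 0) (x 1) (x 2) := by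
      intro x i j k hij hik hjk
      fin_cases i <;> fin_cases j <;> fin_cases k <;> simp_all <;>
        first
          | rfl
          | exact ((h4 (x 0) (x 1) (x 2)).1).symm
          | exact ((h4 (x 0) (x 1) (x 2)).2.1).symm
          | exact ((h4 (x 0) (x 1) (x 2)).2.2.1).symm
          | exact ((h4 (x 0) (x 1) (x 2)).2.2.2.1).symm
          | exact ((h4 (x 0) (x 1) (x 2)).2.2.2.2).symm
    refine ⟨fun x => hG _ _ _, ?_, ?_, ?_, ?_⟩
    · intro x
      constructor
      · intro h0
        have hall : x 1 = x 0 ∧ x 2 = x 0 ∧ x 2 = x 1 := by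
          by_contra hc
          push_neg at hc
          have : x 0 ≠ x 1 ∨ x 1 ≠ x 2 ∨ x 0 ≠ x 2 := by tauto
          exact absurd h0 (ne_of_gt (hpos (x 0) (x 1) (x 2) this))
        intro i j
        fin_cases i <;> fin_cases j <;> simp [hall.1, hall.2.1, hall.2.2]
      · intro h
        have e1 : x 1 = x 0 := h 1 0
        have e2 : x 2 = x 0 := h 2 0
        simp only [e1, e2]
        exact h1 (x 0)
    · intro x σ
      have h01 : σ 0 ≠ σ 1 := fun h => absurd (σ.injective h) (by decide)
      have h02 : σ 0 ≠ σ 2 := fun h => absurd (σ.injective h) (by decide)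
      have h12 : σ 1 ≠ σ 2 := fun h => absurd (σ.injective h) (by decide)
      exact hidx x (σ 0) (σ 1) (σ 2) h01 h02 h12
    · intro x y hss
      have hsub : Set.range x ⊆ Set.range y := hss.1
      obtain ⟨c, hcY, hcX⟩ := Set.exists_of_ssubset hss
      have hx0 : x 0 ∈ Set.range y := hsub ⟨0, rfl⟩
      have hx1 : x 1 ∈ Set.range y := hsub ⟨1, rfl⟩
      have hx2 : x 2 ∈ Set.range y := hsub ⟨2, rfl⟩
      have hc0 : c ≠ x 0 := fun e => hcX (e ▸ ⟨0, rfl⟩)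
      have hc1 : c ≠ x 1 := fun e => hcX (e ▸ ⟨1, rfl⟩)
      have hc2 : c ≠ x 2 := fun e => hcX (e ▸ ⟨2, rfl⟩)
      have hkey : ∀ a b : Ω, a ≠ b → b ≠ c → a ≠ c →
          a ∈ Set.range y → b ∈ Set.range y →
          G (y 0) (y 1) (y 2) = G a b c := by
        intro a b hab hbc hac ha hb
        obtain ⟨ia, ha⟩ := ha
        obtain ⟨ib, hb⟩ := hb
        obtain ⟨ic, hc⟩ := hcY
        have hiab : ia ≠ ib := fun e => hab (by rw [← ha, ← hb, e])
        have hiac : ia ≠ ic := fun e => hac (by rw [← ha, ← hc, e])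
        have hibc : ib ≠ ic := fun e => hbc (by rw [← hb, ← hc, e])
        have := hidx y ia ib ic hiab hiac hibc
        rw [ha, hb, hc] at this
        exact this.symm
      by_cases e01 : x 0 = x 1
      case pos =>
       by_cases e12 : x 1 = x 2
       · have : G (x 0) (x 1) (x 2) = 0 := by rw [e01, e12]; exact h1 (x 2)
         rw [this]; exact hG _ _ _
       · -- x0 = x1 ≠ x2
         have hab : x 0 ≠ x 2 := by rw [e01]; exact e12
         have hy : G (y 0) (y 1) (y 2) = G (x 0) (x 2) c :=
           hkey (x 0) (x 2) hab (fun e => hc2 e.symm) (fun e => hc0 e.symm) hx0 hx2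
         rw [hy]
         calc G (x 0) (x 1) (x 2) = G (x 0) (x 0) (x 2) := by rw [← e01]
           _ ≤ G (x 0) (x 2) c := h3 _ _ _ (fun e => hc2 e.symm)
      case neg =>
       by_cases e12 : x 1 = x 2
       · -- x0 ≠ x1 = x2
        have hab : x 0 ≠ x 1 := e01
        have hy : G (y 0) (y 1) (y 2) = G (x 0) (x 1) c :=
          hkey (x 0) (x 1) hab (fun e => hc1 e.symm) (fun e => hc0 e.symm) hx0 hx1
        rw [hy]
        calc G (x 0) (x 1) (x 2) = G (x 1) (x 1) (x 0) := by
              rw [← e12, (h4 (x 0) (x 1) (x 1)).2.2.1]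
          _ ≤ G (x 1) (x 0) c := h3 _ _ _ (fun e => hc0 e.symm)
          _ = G (x 0) (x 1) c := ((h4 (x 0) (x 1) c).2.1).symm
       · by_cases e02 : x 0 = x 2
         · -- x0 = x2, x0 ≠ x1
           have hab : x 0 ≠ x 1 := e01
           have hy : G (y 0) (y 1) (y 2) = G (x 0) (x 1) c :=
             hkey (x 0) (x 1) hab (fun e => hc1 e.symm) (fun e => hc0 e.symm) hx0 hx1
           rw [hy]
           calc G (x 0) (x 1) (x 2) = G (x 0) (x 0) (x 1) := by
                 rw [← e02, ← (h4 (x 0) (x 0) (x 1)).1]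
             _ ≤ G (x 0) (x 1) c := h3 _ _ _ (fun e => hc1 e.symm)
         · -- all distinct: impossible
           exfalso
           obtain ⟨i0, hi0⟩ := hx0
           obtain ⟨i1, hi1⟩ := hx1
           obtain ⟨i2, hi2⟩ := hx2
           obtain ⟨ic, hic⟩ := hcY
           have pig : ∀ a b u v : Fin 3,
               a = b ∨ a = u ∨ a = v ∨ b = u ∨ b = v ∨ u = v := by decide
           rcases pig i0 i1 i2 ic with e | e | e | e | e | e
           · exact e01 (by rw [← hi0, ← hi1, e])
           · exact e02 (by rw [← hi0, ← hi2, e])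
           · exact hc0 (by rw [← hi0, ← hic, e])
           · exact e12 (by rw [← hi1, ← hi2, e])
           · exact hc1 (by rw [← hi1, ← hic, e])
           · exact hc2 (by rw [← hi2, ← hic, e])
    · intro s hs x y w
      interval_cases s
      · simpa using h5 (x 0) (y 1) (y 2) w
      · have key : G (x 0) (x 1) (y 2) ≤ G (x 0) (x 1) w + G w w (y 2) := by
          calc G (x 0) (x 1) (y 2) = G (y 2) (x 0) (x 1) := (h4 _ _ _).2.2.2.1
            _ ≤ G (y 2) w w + G w (x 0) (x 1) := h5 _ _ _ w
            _ = G w w (y 2) + G (x 0) (x 1) w := by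
                rw [(h4 (y 2) w w).2.2.1, (h4 w (x 0) (x 1)).2.2.1]
            _ = G (x 0) (x 1) w + G w w (y 2) := by ring
        simpa using key
end

section
/- Let g be a g-metric with order n on a nonempty set Ω, and let ψ: [0,∞) → [0,∞) be a function that is increasing (monotone nondecreasing), satisfies ψ(0) = 0, ψ(x) = 0 only if x = 0, and is subadditive, i.e., ψ(x + y) ≤ ψ(x) + ψ(y) for all x, y ≥ 0. Then the composition d(x₀,…,xₙ) = ψ(g(x₀,…,xₙ)) is a g-metric with order n on Ω. -/
open scoped Classical

/-- The composition of a g-metric with an increasing, vanishing-only-at-zero,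
subadditive function `ψ : [0,∞) → [0,∞)` is again a g-metric. -/
theorem isGMetric_comp {Ω : Type*} [Nonempty Ω] {n : ℕ} (hn : 1 ≤ n)
    (g : (Fin (n + 1) → Ω) → ℝ) (hg : IsGMetric n g) (ψ : ℝ → ℝ)
    (hψmono : ∀ x y : ℝ, 0 ≤ x → x ≤ y → ψ x ≤ ψ y)
    (hψnonneg : ∀ x : ℝ, 0 ≤ x → 0 ≤ ψ x)
    (hψ0 : ψ 0 = 0)
    (hψ0' : ∀ x : ℝ, 0 ≤ x → ψ x = 0 → x = 0)
    (hψsub : ∀ x y : ℝ, 0 ≤ x → 0 ≤ y → ψ (x + y) ≤ ψ x + ψ y) :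
    IsGMetric n (fun x => ψ (g x)) := by
  constructor
  · intro x; exact hψnonneg _ (hg.nonneg x)
  · intro x
    constructor
    · intro h
      have := hψ0' _ (hg.nonneg x) h
      exact (hg.eq_zero_iff x).mp this
    · intro h
      rw [(hg.eq_zero_iff x).mpr h, hψ0]
  · intro x σ; rw [hg.perm_inv x σ]
  · intro x y h; exact hψmono _ _ (hg.nonneg x) (hg.mono x y h)
  · intro s hs x y w
    calc ψ (g fun i => if i.val ≤ s then x i else y i)
        ≤ ψ ((g fun i => if i.val ≤ s then x i else w) +
            (g fun i => if i.val ≤ s then w else y i)) :=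
          hψmono _ _ (hg.nonneg _) (hg.triangle s hs x y w)
      _ ≤ _ := hψsub _ _ (hg.nonneg _) (hg.nonneg _)
end

section
/- Let g be a g-metric with order n on a nonempty set Ω. Then for all x₀, x₁, …, xₙ, w ∈ Ω: g(x₀, x₁, …, xₙ) ≤ Σ_{i=0}^{n} g(xᵢ, w, …, w), where in each summand w is repeated n times. -/
open scoped Classical

/-! Peel off one coordinate at a time: the triangle inequality with split point `k` and
pivot `w` bounds `g(x₀, …, x_{k+1}, w, …, w)` by `g(x₀, …, x_k, w, …, w)` plus a tuple in which
only the coordinate `k + 1` differs from `w`, and permutation invariance moves that coordinate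
to the front. Induction on `k` then gives the bound. -/

open Function

namespace IsGMetric

variable {Ω : Type*} {n : ℕ} {g : (Fin (n + 1) → Ω) → ℝ}

theorem apply_update_const (hg : IsGMetric n g) (w a : Ω) (k : Fin (n + 1)) :
    g (update (fun _ => w) k a) = g (update (fun _ => w) 0 a) := by
  rw [← hg.perm_inv _ (Equiv.swap 0 k), update_comp_equiv]
  simp only [Equiv.symm_swap, Equiv.swap_apply_right]
  rfl

theorem prefix_succ_le_add (hg : IsGMetric n g) (x : Fin (n + 1) → Ω) (w : Ω) {k : ℕ}
    (hk : k < n) :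
    g (fun i => if i.val ≤ k + 1 then x i else w) ≤
      g (fun i => if i.val ≤ k then x i else w) +
        g (update (fun _ => w) 0 (x ⟨k + 1, by omega⟩)) := by
  have htri := hg.triangle k hk x (fun i => if i.val ≤ k + 1 then x i else w) w
  have hleft : (fun i : Fin (n + 1) => if i.val ≤ k then x i
      else if i.val ≤ k + 1 then x i else w) = fun i => if i.val ≤ k + 1 then x i else w := by
    funext i
    split_ifs <;> first | rfl | omega
  have hright : (fun i : Fin (n + 1) => if i.val ≤ k then w
      else if i.val ≤ k + 1 then x i else w) = update (fun _ => w) ⟨k + 1, by omega⟩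
        (x ⟨k + 1, by omega⟩) := by
    funext i
    rcases eq_or_ne i ⟨k + 1, by omega⟩ with rfl | hi
    · simp
    · have hi_val : i.val ≠ k + 1 := fun h => hi (Fin.ext h)
      rw [update_of_ne hi]
      split_ifs <;> first | rfl | omega
  rwa [hleft, hright, hg.apply_update_const] at htri

theorem prefix_le_sum (hg : IsGMetric n g) (x : Fin (n + 1) → Ω) (w : Ω) {k : ℕ}
    (hk : k ≤ n) :
    g (fun i => if i.val ≤ k then x i else w) ≤
      ∑ i ∈ Finset.univ.filter (fun i : Fin (n + 1) => i.val ≤ k),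
        g (update (fun _ => w) 0 (x i)) := by
  induction k with
  | zero =>
    have hfilter : Finset.univ.filter (fun i : Fin (n + 1) => i.val ≤ 0) = {0} := by
      ext i
      simp only [Finset.mem_filter, Finset.mem_univ, true_and, Finset.mem_singleton, Fin.ext_iff,
        Fin.val_zero, Nat.le_zero]
    have htuple : (fun i : Fin (n + 1) => if i.val ≤ 0 then x i else w) =
        update (fun _ => w) 0 (x 0) := by
      funext i
      rcases eq_or_ne i 0 with rfl | hi
      · simp
      · rw [update_of_ne hi,
          if_neg (Nat.pos_iff_ne_zero.mpr (Fin.val_ne_zero_iff.mpr hi)).not_ge]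
    rw [hfilter, Finset.sum_singleton, htuple]
  | succ k ih =>
    set K : Fin (n + 1) := ⟨k + 1, by omega⟩
    have hfilter : Finset.univ.filter (fun i : Fin (n + 1) => i.val ≤ k + 1) =
        insert K (Finset.univ.filter fun i : Fin (n + 1) => i.val ≤ k) := by
      ext i
      simp only [Finset.mem_filter, Finset.mem_univ, true_and, Finset.mem_insert, K,
        Fin.ext_iff]
      omega
    have hK : K ∉ Finset.univ.filter fun i : Fin (n + 1) => i.val ≤ k := by simp [K]
    rw [hfilter, Finset.sum_insert hK]
    linarith [hg.prefix_succ_le_add x w (by omega : k < n), ih (by omega)]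

end IsGMetric

theorem gMetric_le_sum_general {Ω : Type*} {n : ℕ}
    (g : (Fin (n + 1) → Ω) → ℝ) (hg : IsGMetric n g)
    (x : Fin (n + 1) → Ω) (w : Ω) :
    g x ≤ ∑ i : Fin (n + 1), g (fun j => if j.val = 0 then x i else w) := by
  have hsummand : ∀ a : Ω, (fun j : Fin (n + 1) => if j.val = 0 then a else w) =
      update (fun _ => w) 0 a := by
    intro a
    funext j
    simp only [update_apply, Fin.ext_iff, Fin.val_zero]
  have hprefix : (fun i : Fin (n + 1) => if i.val ≤ n then x i else w) = x := by
    funext i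
    rw [if_pos (Nat.lt_succ_iff.mp i.isLt)]
  have hfilter : Finset.univ.filter (fun i : Fin (n + 1) => i.val ≤ n) = Finset.univ :=
    Finset.filter_true_of_mem fun i _ => Nat.lt_succ_iff.mp i.isLt
  simp only [hsummand]
  simpa only [hprefix, hfilter] using hg.prefix_le_sum x w le_rfl

/-- Basic property (4): `g(x₀,…,xₙ) ≤ Σᵢ g(xᵢ, w, …, w)`. -/
theorem gMetric_le_sum {Ω : Type*} [Nonempty Ω] {n : ℕ} (hn : 1 ≤ n)
    (g : (Fin (n + 1) → Ω) → ℝ) (hg : IsGMetric n g)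
    (x : Fin (n + 1) → Ω) (w : Ω) :
    g x ≤ ∑ i : Fin (n + 1), g (fun j => if j.val = 0 then x i else w) :=
  gMetric_le_sum_general g hg x w
end

section
/- Let g be a g-metric with order n on a nonempty set Ω. Then the function d: Ω × Ω → ℝ₊ defined by d(x,y) = g(x,y,…,y) + g(x,x,y,…,y) + ⋯ + g(x,x,…,x,y) (the sum over s = 1,…,n of g with x repeated s times followed by y repeated n+1−s times) is a metric on Ω. -/
open scoped Classical

/-- The function `d(x,y) = g(x,y,…,y) + g(x,x,y,…,y) + ⋯ + g(x,…,x,y)` is a metric. -/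
theorem gMetric_sum_is_metric {Ω : Type*} [Nonempty Ω] {n : ℕ} (hn : 1 ≤ n)
    (g : (Fin (n + 1) → Ω) → ℝ) (hg : IsGMetric n g)
    (d : Ω → Ω → ℝ)
    (hd : ∀ x y : Ω, d x y = ∑ s ∈ Finset.range n, g fun i => if i.val ≤ s then x else y) :
    (∀ x y : Ω, 0 ≤ d x y) ∧ (∀ x y : Ω, d x y = 0 ↔ x = y) ∧
      (∀ x y : Ω, d x y = d y x) ∧ (∀ x y z : Ω, d x y ≤ d x z + d z y) := by
  have hnn : ∀ x y : Ω, ∀ s ∈ Finset.range n,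
      0 ≤ g fun i => if i.val ≤ s then x else y := fun x y s _ => hg.nonneg _
  refine ⟨?_, ?_, ?_, ?_⟩
  · intro x y; rw [hd]; exact Finset.sum_nonneg (hnn x y)
  · intro x y
    rw [hd]
    constructor
    · intro h
      have h0 := (Finset.sum_eq_zero_iff_of_nonneg (hnn x y)).mp h 0
        (Finset.mem_range.mpr (by omega))
      have := (hg.eq_zero_iff _).mp h0 ⟨0, by omega⟩ ⟨1, by omega⟩
      simpa using this
    · rintro rfl
      apply Finset.sum_eq_zero
      intro s _
      exact (hg.eq_zero_iff _).mpr (fun i j => by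
        by_cases h1 : i.val ≤ s <;> by_cases h2 : j.val ≤ s <;> simp [h1, h2])
  · intro x y
    rw [hd, hd, ← Finset.sum_range_reflect (fun s => g fun i => if i.val ≤ s then y else x)]
    apply Finset.sum_congr rfl
    intro s hs
    have hs' : s < n := Finset.mem_range.mp hs
    have key : (fun i : Fin (n+1) => if i.val ≤ n - 1 - s then y else x)
        = (fun i : Fin (n+1) => if i.val ≤ s then x else y) ∘ Fin.revPerm := by
      funext i
      simp only [Function.comp_apply, Fin.revPerm_apply, Fin.val_rev]
      have hi := i.isLt
      rcases le_or_gt i.val (n - 1 - s) with h | h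
      · rw [if_pos h, if_neg (by omega)]
      · rw [if_neg (by omega), if_pos (by omega)]
    rw [key, hg.perm_inv]
  · intro x y z
    rw [hd x y, hd x z, hd z y, ← Finset.sum_add_distrib]
    apply Finset.sum_le_sum
    intro s hs
    exact hg.triangle s (Finset.mem_range.mp hs) (fun _ => x) (fun _ => y) z
end

section
/- Let g be a g-metric with order n on a nonempty set Ω and define d(x,y) = g(x,y,…,y) + g(y,x,…,x) (in each term the second point is repeated n times). Then for every x₀ ∈ Ω and r > 0 the following ball inclusions hold: B_g(x₀, r/(n+1)) ⊆ B_d(x₀, r) ⊆ B_g(x₀, r), where B_g(x₀,r) = {y ∈ Ω : g(x₀, y, …, y) < r} (y repeated n times) and B_d(x₀,r) = {y ∈ Ω : d(x₀,y) < r}. -/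
open scoped Classical

lemma gMetric_swap_pos {Ω : Type*} {n : ℕ} (g : (Fin (n + 1) → Ω) → ℝ)
    (hg : IsGMetric n g) (a b : Ω) (m : ℕ) (hm : m ≤ n) :
    g (fun i => if i.val = m then a else b) = g (fun i => if i.val = 0 then a else b) := by
  set c : Fin (n+1) := ⟨m, by omega⟩ with hc
  have key : (fun i : Fin (n+1) => if i.val = m then a else b)
      = (fun i : Fin (n+1) => if i.val = 0 then a else b) ∘ Equiv.swap 0 c := by
    funext i
    have hiff : Equiv.swap (0 : Fin (n+1)) c i = 0 ↔ i = c := by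
      rw [(Equiv.swap 0 c).apply_eq_iff_eq_symm_apply, Equiv.symm_swap, Equiv.swap_apply_left]
    have hval : (Equiv.swap (0 : Fin (n+1)) c i).val = 0 ↔ i.val = m := by
      rw [Fin.ext_iff, Fin.ext_iff] at hiff
      simpa [hc] using hiff
    simp only [Function.comp]
    by_cases h : i.val = m
    · rw [if_pos h, if_pos (hval.mpr h)]
    · rw [if_neg h, if_neg (fun hh => h (hval.mp hh))]
  rw [key, hg.perm_inv]

lemma gMetric_symm_bound {Ω : Type*} {n : ℕ} (hn : 1 ≤ n)
    (g : (Fin (n + 1) → Ω) → ℝ) (hg : IsGMetric n g) (x y : Ω) :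
    g (fun i => if i.val = 0 then y else x) ≤
      (n : ℝ) * g (fun i => if i.val = 0 then x else y) := by
  set t : ℕ → Fin (n+1) → Ω := fun k i => if i.val < n + 1 - k then x else y with ht
  have htn : t n = fun i : Fin (n+1) => if i.val = 0 then x else y := by
    funext i
    simp only [t]
    split_ifs <;> first | rfl | omega
  have ht1 : g (t 1) = g (fun i : Fin (n+1) => if i.val = 0 then y else x) := by
    have e : t 1 = fun i : Fin (n+1) => if i.val = n then y else x := by
      funext i
      simp only [t]
      have := i.isLt
      split_ifs <;> first | rfl | omega
    rw [e, gMetric_swap_pos g hg y x n le_rfl]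
  have step : ∀ k, 1 ≤ k → k ≤ n - 1 → g (t k) ≤ g (t (k+1)) + g (t n) := by
    intro k hk1 hk2
    have hs : n - k - 1 < n := by omega
    have h3 := hg.triangle (n - k - 1) hs (fun _ => x)
        (fun i => if i.val = n - k then x else y) y
    have e1 : (fun i : Fin (n+1) => if i.val ≤ n - k - 1 then (fun _ : Fin (n+1) => x) i
        else if i.val = n - k then x else y) = t k := by
      funext i
      simp only [t]
      split_ifs <;> first | rfl | omega
    have e2 : (fun i : Fin (n+1) => if i.val ≤ n - k - 1 then (fun _ : Fin (n+1) => x) i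
        else y) = t (k+1) := by
      funext i
      simp only [t]
      split_ifs <;> first | rfl | omega
    have e3 : (fun i : Fin (n+1) => if i.val ≤ n - k - 1 then y
        else if i.val = n - k then x else y) = fun i : Fin (n+1) =>
        if i.val = n - k then x else y := by
      funext i
      split_ifs <;> first | rfl | omega
    rw [e1, e2, e3] at h3
    rwa [gMetric_swap_pos g hg x y (n - k) (by omega), ← htn] at h3
  have chain : ∀ m, m ≤ n - 1 → g (t (n - m)) ≤ ((m : ℝ) + 1) * g (t n) := by
    intro m
    induction m with
    | zero => intro _; simp
    | succ m ih =>
      intro hm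
      have h1 : n - (m+1) + 1 = n - m := by omega
      have h2 := step (n - (m+1)) (by omega) (by omega)
      rw [h1] at h2
      have h3 := ih (by omega)
      have : g (t (n - (m+1))) ≤ ((m : ℝ) + 1) * g (t n) + g (t n) := by linarith
      calc g (t (n - (m+1))) ≤ ((m : ℝ) + 1) * g (t n) + g (t n) := this
        _ = ((m + 1 : ℕ) + 1 : ℝ) * g (t n) := by push_cast; ring
  have hfin := chain (n - 1) (le_rfl)
  rw [show n - (n - 1) = 1 from by omega] at hfin
  have hcast : ((n - 1 : ℕ) : ℝ) + 1 = (n : ℝ) := by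
    have := Nat.sub_add_cancel hn
    exact_mod_cast congrArg (Nat.cast : ℕ → ℝ) this
  rw [hcast] at hfin
  rw [← ht1, ← htn]
  exact hfin

/-- Ball inclusions: `B_g(x₀, r/(n+1)) ⊆ B_d(x₀, r) ⊆ B_g(x₀, r)` where
`d(x,y) = g(x,y,…,y) + g(y,x,…,x)`. -/
theorem gMetric_ball_inclusions {Ω : Type*} [Nonempty Ω] {n : ℕ} (hn : 1 ≤ n)
    (g : (Fin (n + 1) → Ω) → ℝ) (hg : IsGMetric n g)
    (d : Ω → Ω → ℝ)
    (hd : ∀ x y : Ω, d x y =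
      g (fun i => if i.val = 0 then x else y) + g (fun i => if i.val = 0 then y else x))
    (x₀ : Ω) (r : ℝ) (hr : 0 < r) :
    {y : Ω | g (fun i => if i.val = 0 then x₀ else y) < r / ((n : ℝ) + 1)} ⊆
        {y : Ω | d x₀ y < r} ∧
      {y : Ω | d x₀ y < r} ⊆ {y : Ω | g (fun i => if i.val = 0 then x₀ else y) < r} := by
  have hnpos : (0 : ℝ) < (n : ℝ) + 1 := by positivity
  constructor
  · intro y hy
    simp only [Set.mem_setOf_eq] at hy ⊢
    rw [hd]
    have hb := gMetric_symm_bound hn g hg x₀ y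
    have : g (fun i => if i.val = 0 then x₀ else y)
        + g (fun i => if i.val = 0 then y else x₀)
        ≤ ((n : ℝ) + 1) * g (fun i => if i.val = 0 then x₀ else y) := by linarith
    calc g (fun i => if i.val = 0 then x₀ else y)
        + g (fun i => if i.val = 0 then y else x₀)
        ≤ ((n : ℝ) + 1) * g (fun i => if i.val = 0 then x₀ else y) := this
      _ < ((n : ℝ) + 1) * (r / ((n : ℝ) + 1)) := by
          exact mul_lt_mul_of_pos_left hy hnpos
      _ = r := by field_simp
  · intro y hy
    simp only [Set.mem_setOf_eq] at hy ⊢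
    rw [hd] at hy
    have := hg.nonneg (fun i => if i.val = 0 then y else x₀)
    linarith
end

section
/- (Banach contraction principle in a g-metric space) Let g be a g-metric with order n on a nonempty set Ω such that (Ω, g) is complete, and let T: Ω → Ω be a mapping for which there exists λ ∈ [0,1) with g(T(x₀), T(x₁), …, T(xₙ)) ≤ λ · g(x₀, x₁, …, xₙ) for all x₀, …, xₙ ∈ Ω. Then T has a unique fixed point in Ω. -/
open scoped Classical

/-- A sequence `xseq` in a g-metric space `(Ω, g)` g-converges to `x`. -/
def GConv {Ω : Type*} {n : ℕ} (g : (Fin (n + 1) → Ω) → ℝ) (xseq : ℕ → Ω) (x : Ω) : Prop :=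
  ∀ ε : ℝ, 0 < ε → ∃ N : ℕ, ∀ idx : Fin n → ℕ, (∀ k, N ≤ idx k) →
    g (Fin.cons x (fun k => xseq (idx k))) < ε

/-- A sequence `xseq` in a g-metric space `(Ω, g)` is g-Cauchy. -/
def GCauchy {Ω : Type*} {n : ℕ} (g : (Fin (n + 1) → Ω) → ℝ) (xseq : ℕ → Ω) : Prop :=
  ∀ ε : ℝ, 0 < ε → ∃ N : ℕ, ∀ idx : Fin (n + 1) → ℕ, (∀ k, N ≤ idx k) →
    g (fun k => xseq (idx k)) < ε

/-!
Write `d(a, b) = g(a, b, …, b)`. The triangle axiom with `s = 0`, applied one coordinate at a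
time, bounds `g(z₀, …, zₙ)` by `∑ⱼ d(zⱼ, w)`; in particular `d` satisfies the triangle
inequality and `d(b, a) ≤ n d(a, b)`. Hence `ρ(a, b) = d(a, b) + d(b, a)` is a metric whose
Cauchy sequences are g-Cauchy and for which g-limits are limits, so `ρ` is complete, and `T` is a
`λ`-contraction for `ρ`. The classical Banach fixed point theorem finishes the proof.
-/

section

variable {Ω : Type*} {n : ℕ}

def gDist (g : (Fin (n + 1) → Ω) → ℝ) (a b : Ω) : ℝ := g (Fin.cons a fun _ => b)

variable {g : (Fin (n + 1) → Ω) → ℝ}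

theorem gDist_map_le {T : Ω → Ω} {lam : ℝ}
    (hT : ∀ x : Fin (n + 1) → Ω, g (fun i => T (x i)) ≤ lam * g x) (a b : Ω) :
    gDist g (T a) (T b) ≤ lam * gDist g a b := by
  have h := hT (Fin.cons a fun _ => b)
  rwa [← Function.comp_def, Fin.comp_cons] at h

namespace IsGMetric

variable (hg : IsGMetric n g)
include hg

theorem gDist_nonneg (a b : Ω) : 0 ≤ gDist g a b := hg.nonneg _

theorem gDist_self (a : Ω) : gDist g a a = 0 :=
  (hg.eq_zero_iff _).mpr fun i j => by cases i using Fin.cases <;> cases j using Fin.cases <;> rfl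

theorem eq_of_gDist_eq_zero (hn : 1 ≤ n) {a b : Ω} (h : gDist g a b = 0) : a = b :=
  (hg.eq_zero_iff _).mp h 0 (Fin.succ ⟨0, hn⟩)

/-- The triangle axiom with `s = 0`, moved to an arbitrary coordinate by a transposition. -/
theorem le_gDist_add_update (hn : 1 ≤ n) (z : Fin (n + 1) → Ω) (k : Fin (n + 1)) (w : Ω) :
    g z ≤ gDist g (z k) w + g (Function.update z k w) := by
  have h0 : ∀ y : Fin (n + 1) → Ω,
      g y ≤ g (Fin.cons (y 0) fun _ => w) + g (Function.update y 0 w) := by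
    intro y
    convert hg.triangle 0 (by omega) y y w using 2 <;> congr 1 <;> funext i <;>
      cases i using Fin.cases <;> simp
  set σ := Equiv.swap 0 k
  have hσ : Function.update (z ∘ σ) 0 w = Function.update z k w ∘ σ := by
    rw [Function.update_comp_equiv, Equiv.symm_swap, Equiv.swap_apply_right]
  calc g z = g (z ∘ σ) := (hg.perm_inv z σ).symm
    _ ≤ gDist g ((z ∘ σ) 0) w + g (Function.update (z ∘ σ) 0 w) := h0 _
    _ = gDist g (z k) w + g (Function.update z k w) := by
      rw [hσ, hg.perm_inv, Function.comp_apply, Equiv.swap_apply_left]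

theorem le_sum_gDist (hn : 1 ≤ n) (z : Fin (n + 1) → Ω) (w : Ω) :
    g z ≤ ∑ j, gDist g (z j) w := by
  have key : ∀ S : Finset (Fin (n + 1)),
      g z ≤ ∑ j ∈ S, gDist g (z j) w + g (S.piecewise (fun _ => w) z) := by
    intro S
    induction S using Finset.induction_on with
    | empty => simp
    | insert k S hk ih =>
      calc g z ≤ ∑ j ∈ S, gDist g (z j) w + g (S.piecewise (fun _ => w) z) := ih
        _ ≤ ∑ j ∈ S, gDist g (z j) w +
            (gDist g (z k) w + g ((insert k S).piecewise (fun _ => w) z)) := by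
          gcongr
          rw [Finset.piecewise_insert, ← S.piecewise_eq_of_notMem (fun _ => w) z hk]
          exact hg.le_gDist_add_update hn _ _ _
        _ = ∑ j ∈ insert k S, gDist g (z j) w +
            g ((insert k S).piecewise (fun _ => w) z) := by
          rw [Finset.sum_insert hk]; ring
  have hconst : g (fun _ => w) = 0 := (hg.eq_zero_iff _).mpr fun _ _ => rfl
  simpa [hconst] using key Finset.univ

theorem gDist_triangle (hn : 1 ≤ n) (a b w : Ω) : gDist g a b ≤ gDist g a w + gDist g w b := by
  simpa [gDist, Fin.update_cons_zero] using hg.le_gDist_add_update hn (Fin.cons a fun _ => b) 0 w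

theorem gDist_comm_le (hn : 1 ≤ n) (a b : Ω) : gDist g b a ≤ n * gDist g a b :=
  (hg.le_sum_gDist hn (Fin.cons b fun _ => a) b).trans_eq <| by
    simp [Fin.sum_univ_succ, hg.gDist_self]

abbrev toMetricSpace (hn : 1 ≤ n) : MetricSpace Ω where
  dist a b := gDist g a b + gDist g b a
  dist_self a := by simp [hg.gDist_self]
  dist_comm a b := add_comm _ _
  dist_triangle a b c := by linarith [hg.gDist_triangle hn a c b, hg.gDist_triangle hn c a b]
  eq_of_dist_eq_zero {a b} h :=
    hg.eq_of_gDist_eq_zero hn (by linarith [hg.gDist_nonneg a b, hg.gDist_nonneg b a])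

theorem gCauchy_of_cauchySeq (hn : 1 ≤ n) {x : ℕ → Ω} :
    letI := hg.toMetricSpace hn
    CauchySeq x → GCauchy g x := by
  let _ := hg.toMetricSpace hn
  intro hx ε hε
  obtain ⟨N, hN⟩ := Metric.cauchySeq_iff'.mp hx (ε / (n + 1)) (by positivity)
  refine ⟨N, fun idx hidx => ?_⟩
  calc g (fun k => x (idx k)) ≤ ∑ j, gDist g (x (idx j)) (x N) := hg.le_sum_gDist hn _ _
    _ < ∑ _j : Fin (n + 1), ε / (n + 1) :=
      Finset.sum_lt_sum_of_nonempty Finset.univ_nonempty fun j _ =>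
        (le_add_of_nonneg_right (hg.gDist_nonneg _ _)).trans_lt (hN _ (hidx j))
    _ = ε := by
      rw [Finset.sum_const, Finset.card_univ, Fintype.card_fin, nsmul_eq_mul]
      push_cast
      field_simp

theorem tendsto_of_gConv (hn : 1 ≤ n) {x : ℕ → Ω} {a : Ω} (ha : GConv g x a) :
    letI := hg.toMetricSpace hn
    Filter.Tendsto x Filter.atTop (nhds a) := by
  let _ := hg.toMetricSpace hn
  refine Metric.tendsto_atTop.mpr fun ε hε => ?_
  obtain ⟨N, hN⟩ := ha (ε / (n + 1)) (by positivity)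
  refine ⟨N, fun m hm => ?_⟩
  have hm : gDist g a (x m) < ε / (n + 1) := hN (fun _ => m) fun _ => hm
  calc dist (x m) a = gDist g (x m) a + gDist g a (x m) := rfl
    _ ≤ (n + 1) * gDist g a (x m) := by linarith [hg.gDist_comm_le hn a (x m)]
    _ < (n + 1) * (ε / (n + 1)) := by gcongr
    _ = ε := by field_simp

theorem completeSpace_toMetricSpace (hn : 1 ≤ n)
    (hcomplete : ∀ x : ℕ → Ω, GCauchy g x → ∃ a, GConv g x a) :
    letI := hg.toMetricSpace hn
    CompleteSpace Ω := by
  let _ := hg.toMetricSpace hn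
  refine Metric.complete_of_cauchySeq_tendsto fun x hx => ?_
  obtain ⟨a, ha⟩ := hcomplete x (hg.gCauchy_of_cauchySeq hn hx)
  exact ⟨a, hg.tendsto_of_gConv hn ha⟩

theorem contractingWith (hn : 1 ≤ n) {T : Ω → Ω} {lam : ℝ} (hlam0 : 0 ≤ lam)
    (hlam1 : lam < 1)
    (hT : ∀ x : Fin (n + 1) → Ω, g (fun i => T (x i)) ≤ lam * g x) :
    letI := hg.toMetricSpace hn
    ContractingWith ⟨lam, hlam0⟩ T := by
  let _ := hg.toMetricSpace hn
  refine ⟨by exact_mod_cast hlam1, LipschitzWith.of_dist_le_mul fun a b => ?_⟩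
  show gDist g (T a) (T b) + gDist g (T b) (T a) ≤ lam * (gDist g a b + gDist g b a)
  linarith [gDist_map_le hT a b, gDist_map_le hT b a]

end IsGMetric

end

/-- Banach contraction mapping principle in a complete g-metric space. -/
theorem gMetric_banach {Ω : Type*} [Nonempty Ω] {n : ℕ} (hn : 1 ≤ n)
    (g : (Fin (n + 1) → Ω) → ℝ) (hg : IsGMetric n g)
    (hcomplete : ∀ xseq : ℕ → Ω, GCauchy g xseq → ∃ x : Ω, GConv g xseq x)
    (T : Ω → Ω) (lam : ℝ) (hlam0 : 0 ≤ lam) (hlam1 : lam < 1)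
    (hT : ∀ x : Fin (n + 1) → Ω, g (fun i => T (x i)) ≤ lam * g x) :
    ∃! y : Ω, T y = y := by
  let _ := hg.toMetricSpace hn
  have := hg.completeSpace_toMetricSpace hn hcomplete
  have hcontr := hg.contractingWith hn hlam0 hlam1 hT
  exact ⟨_, hcontr.fixedPoint_isFixedPt, fun y hy => hcontr.fixedPoint_unique hy⟩
end

section
/- (Ćirić fixed point theorem in a g-metric space) Let g be a g-metric with order n on a nonempty set Ω and let T: Ω → Ω. Assume Ω is T-orbitally g-complete, and that T is a g-quasi-contraction: there exists λ ∈ [0,1) such that for all x₀,…,xₙ ∈ Ω, g(T(x₀),…,T(xₙ)) ≤ (λ/n) · max( {g(x₀,…,xₙ)} ∪ {g(xᵢ, T(xⱼ), …, T(xⱼ)) : i,j = 0,…,n} ), where in g(xᵢ, T(xⱼ),…,T(xⱼ)) the point T(xⱼ) is repeated n times. Then: (1) T has a unique fixed point y in Ω; (2) for every x ∈ Ω, the sequence of iterates {T^N(x)} g-converges to y; (3) g(T^N(x), y, …, y) ≤ (λ^N / (n^{N−1}(1−λ))) · g(x, T(x), …, T(x)) for every x ∈ Ω and N ≥ 1 (with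 y and T(x) each repeated n times). -/
open scoped Classical

section gaux
variable {Ω : Type*} {n : ℕ} {g : (Fin (n + 1) → Ω) → ℝ}

lemma cons_eq_ite (u v : Ω) (i : Fin (n+1)) :
    (Fin.cons u (fun _ => v) : Fin (n+1) → Ω) i = if i.val = 0 then u else v := by
  cases i using Fin.cases with
  | zero => simp
  | succ j => simp

lemma gd_self (hg : IsGMetric n g) (a : Ω) : g (Fin.cons a fun _ => a) = 0 := by
  rw [hg.eq_zero_iff]
  intro i j
  have h : ∀ i : Fin (n+1), (Fin.cons a (fun _ => a) : Fin (n+1) → Ω) i = a := by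
    intro i; cases i using Fin.cases <;> simp
  rw [h i, h j]

lemma gd_eq (hg : IsGMetric n g) (hn : 1 ≤ n) {a b : Ω}
    (h : g (Fin.cons a fun _ => b) = 0) : a = b := by
  have h2 := (hg.eq_zero_iff _).mp h 0 ⟨1, by omega⟩
  have e1 : (Fin.cons a (fun _ => b) : Fin (n+1) → Ω) 0 = a := rfl
  have e2 : (Fin.cons a (fun _ => b) : Fin (n+1) → Ω) ⟨1, by omega⟩ = b := by
    have : (⟨1, by omega⟩ : Fin (n+1)) = Fin.succ ⟨0, by omega⟩ := rfl
    rw [this, Fin.cons_succ]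
  rw [e1, e2] at h2
  exact h2

lemma gd_tri (hg : IsGMetric n g) (hn : 1 ≤ n) (a b c : Ω) :
    g (Fin.cons a fun _ => c) ≤ g (Fin.cons a fun _ => b) + g (Fin.cons b fun _ => c) := by
  have h := hg.triangle 0 hn (fun _ => a) (fun _ => c) b
  have e1 : (fun i : Fin (n+1) => if i.val ≤ 0 then a else c) = Fin.cons a fun _ => c := by
    funext i; cases i using Fin.cases <;> simp
  have e2 : (fun i : Fin (n+1) => if i.val ≤ 0 then a else b) = Fin.cons a fun _ => b := by
    funext i; cases i using Fin.cases <;> simp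
  have e3 : (fun i : Fin (n+1) => if i.val ≤ 0 then b else c) = Fin.cons b fun _ => c := by
    funext i; cases i using Fin.cases <;> simp
  rwa [e1, e2, e3] at h

lemma gd_symm (hg : IsGMetric n g) (hn : 1 ≤ n) (a b : Ω) :
    g (Fin.cons a fun _ => b) ≤ n * g (Fin.cons b fun _ => a) := by
  set A : ℕ → ℝ := fun k => g (fun i : Fin (n+1) => if i.val < k then a else b) with hA
  have hA1 : g (Fin.cons a fun _ => b) = A 1 := by
    apply congrArg g
    funext i
    rw [cons_eq_ite]
    rcases Nat.eq_zero_or_pos i.val with h | h <;> simp [h] <;> omega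
  have hAn : g (Fin.cons b fun _ => a) = A n := by
    simp only [hA]
    have hp := hg.perm_inv (fun i : Fin (n+1) => if i.val < n then a else b)
      (Equiv.swap 0 (Fin.last n))
    rw [← hp]
    apply congrArg g
    funext i
    simp only [Function.comp_apply]
    rw [cons_eq_ite]
    rcases eq_or_ne i 0 with rfl | h0
    · rw [Equiv.swap_apply_left]
      simp [Fin.last]
    · rcases eq_or_ne i (Fin.last n) with rfl | hl
      · rw [Equiv.swap_apply_right]
        have h1 : ¬ (Fin.last n).val = 0 := by simp [Fin.last]; omega
        have h2 : ((0 : Fin (n+1)) : ℕ) = 0 := rfl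
        simp only [h1, h2, if_false]
        split_ifs <;> first | rfl | (exfalso; omega)
      · rw [Equiv.swap_apply_of_ne_of_ne h0 hl]
        have h0' : ¬ i.val = 0 := fun h => h0 (Fin.ext h)
        have hl' : i.val < n := by
          have := i.isLt
          have : i.val ≠ n := fun h => hl (Fin.ext h)
          omega
        simp [h0', hl']
  have hstep : ∀ k, 1 ≤ k → k ≤ n - 1 → A k ≤ A (k+1) + A n := by
    intro k hk1 hk2
    simp only [hA]
    have h := hg.triangle (n-1) (by omega)
      (fun i : Fin (n+1) => if i.val < k then a else b) (fun _ => b) a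
    have e1 : (fun i : Fin (n+1) => if i.val ≤ n-1 then (if i.val < k then a else b) else b)
        = fun i : Fin (n+1) => if i.val < k then a else b := by
      funext i; split_ifs <;> first | rfl | (exfalso; omega)
    have e2 : g (fun i : Fin (n+1) => if i.val ≤ n-1 then (if i.val < k then a else b) else a)
        = A (k+1) := by
      simp only [hA]
      have hp := hg.perm_inv
        (fun i : Fin (n+1) => if i.val ≤ n-1 then (if i.val < k then a else b) else a)
        (Equiv.swap ⟨k, by omega⟩ (Fin.last n))
      rw [← hp]
      apply congrArg g
      funext i
      simp only [Function.comp_apply]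
      rcases eq_or_ne i ⟨k, by omega⟩ with rfl | hk
      · rw [Equiv.swap_apply_left]
        have : ¬ (Fin.last n).val ≤ n - 1 := by simp [Fin.last]; omega
        simp [this, Nat.lt_succ_self]
        omega
      · rcases eq_or_ne i (Fin.last n) with rfl | hl
        · rw [Equiv.swap_apply_right]
          have h1 : ((⟨k, by omega⟩ : Fin (n+1)) : ℕ) = k := rfl
          have : (Fin.last n).val = n := rfl
          simp only [this, h1]
          split_ifs <;> first | rfl | (exfalso; omega)
        · rw [Equiv.swap_apply_of_ne_of_ne hk hl]
          have hkv : i.val ≠ k := fun h => hk (Fin.ext h)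
          have hlv : i.val < n := by
            have := i.isLt
            have : i.val ≠ n := fun h => hl (Fin.ext h)
            omega
          split_ifs <;> first | rfl | (exfalso; omega)
    have e3 : (fun i : Fin (n+1) => if i.val ≤ n-1 then a else b)
        = fun i : Fin (n+1) => if i.val < n then a else b := by
      funext i; split_ifs <;> first | rfl | (exfalso; omega)
    rw [e1] at h
    rw [e3] at h
    simp only [hA] at e2
    rw [e2] at h
    exact h
  have hchain : ∀ j, j ≤ n - 1 → A (n - j) ≤ ((j : ℝ) + 1) * A n := by
    intro j
    induction j with
    | zero => intro _; simp
    | succ j ih =>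
      intro hj
      have h1 : A (n - (j+1)) ≤ A (n - (j+1) + 1) + A n :=
        hstep _ (by omega) (by omega)
      have h2 : n - (j+1) + 1 = n - j := by omega
      rw [h2] at h1
      have h3 := ih (by omega)
      push_cast
      linarith
  have hfin := hchain (n-1) le_rfl
  have h4 : n - (n-1) = 1 := by omega
  rw [h4] at hfin
  have h5 : ((n - 1 : ℕ) : ℝ) + 1 = n := by
    rw [Nat.cast_sub hn]; ring
  rw [h5] at hfin
  rw [hA1, hAn]
  exact hfin

lemma gd_sum (hg : IsGMetric n g) (hn : 1 ≤ n) (z : Fin (n+1) → Ω) (w : Ω) :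
    g z ≤ ∑ k : Fin (n+1), g (Fin.cons (z k) fun _ => w) := by
  have main : ∀ j m, m + j = n + 1 →
      g (fun i : Fin (n+1) => if i.val < m then w else z i) ≤
        ∑ k ∈ Finset.univ.filter (fun k : Fin (n+1) => m ≤ k.val),
          g (Fin.cons (z k) fun _ => w) := by
    intro j
    induction j with
    | zero =>
      intro m hm
      have h0 : g (fun i : Fin (n+1) => if i.val < m then w else z i) = 0 := by
        rw [hg.eq_zero_iff]
        intro i j'
        have hi : i.val < m := by have := i.isLt; omega
        have hj : j'.val < m := by have := j'.isLt; omega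
        simp [hi, hj]
      have h1 : Finset.univ.filter (fun k : Fin (n+1) => m ≤ k.val) = ∅ := by
        apply Finset.filter_false_of_mem
        intro k _
        have := k.isLt
        omega
      rw [h0, h1, Finset.sum_empty]
    | succ j ih =>
      intro m hm
      have hmn : m < n + 1 := by omega
      have htr := hg.triangle 0 hn
        (fun _ => z ⟨m, hmn⟩)
        (fun i : Fin (n+1) => if i.val ≤ m then w else z i) w
      have e1 : (fun i : Fin (n+1) => if i.val ≤ 0 then (fun _ : Fin (n+1) => z ⟨m, hmn⟩) i
            else if i.val ≤ m then w else z i)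
          = (fun i : Fin (n+1) => if i.val < m then w else z i) ∘ (Equiv.swap 0 ⟨m, hmn⟩) := by
        funext i
        simp only [Function.comp_apply]
        rcases eq_or_ne i 0 with rfl | h0
        · rw [Equiv.swap_apply_left]
          have h1 : ((⟨m, hmn⟩ : Fin (n+1)) : ℕ) = m := rfl
          have h2 : ((0 : Fin (n+1)) : ℕ) = 0 := rfl
          simp only [h1, h2]
          split_ifs <;> first | rfl | (exfalso; omega)
        · rcases eq_or_ne i ⟨m, hmn⟩ with rfl | hm'
          · rw [Equiv.swap_apply_right]
            have h1 : ((⟨m, hmn⟩ : Fin (n+1)) : ℕ) = m := rfl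
            have h2 : ((0 : Fin (n+1)) : ℕ) = 0 := rfl
            have h3 : m ≠ 0 := by
              intro h
              exact h0 (Fin.ext (by simp [h1, h2, h]))
            simp only [h1, h2]
            split_ifs <;> first | rfl | (exfalso; omega)
          · rw [Equiv.swap_apply_of_ne_of_ne h0 hm']
            have h2 : i.val ≠ 0 := fun h => h0 (Fin.ext h)
            have h3 : i.val ≠ m := fun h => hm' (Fin.ext h)
            split_ifs <;> first | rfl | (exfalso; omega)
      rw [e1, hg.perm_inv] at htr
      have e2 : (fun i : Fin (n+1) => if i.val ≤ 0 then (fun _ : Fin (n+1) => z ⟨m, hmn⟩) i else w)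
          = Fin.cons (z ⟨m, hmn⟩) fun _ => w := by
        funext i
        rw [cons_eq_ite]
        split_ifs <;> first | rfl | (exfalso; omega)
      rw [e2] at htr
      have e3 : (fun i : Fin (n+1) => if i.val ≤ 0 then w else
            if i.val ≤ m then w else z i)
          = fun i : Fin (n+1) => if i.val < m + 1 then w else z i := by
        funext i
        split_ifs <;> first | rfl | (exfalso; omega)
      rw [e3] at htr
      have h4 := ih (m+1) (by omega)
      have hins : Finset.univ.filter (fun k : Fin (n+1) => m ≤ k.val)
          = insert (⟨m, hmn⟩ : Fin (n+1))
              (Finset.univ.filter (fun k : Fin (n+1) => m+1 ≤ k.val)) := by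
        ext k
        simp only [Finset.mem_filter, Finset.mem_univ, true_and, Finset.mem_insert,
          Fin.ext_iff]
        omega
      have hnotmem : (⟨m, hmn⟩ : Fin (n+1)) ∉
          Finset.univ.filter (fun k : Fin (n+1) => m+1 ≤ k.val) := by
        simp only [Finset.mem_filter, Finset.mem_univ, true_and]
        omega
      rw [hins, Finset.sum_insert hnotmem]
      linarith
  have hfin := main (n+1) 0 (by omega)
  have e0 : (fun i : Fin (n+1) => if i.val < 0 then w else z i) = z := by
    funext i; simp
  have efil : Finset.univ.filter (fun k : Fin (n+1) => 0 ≤ k.val) = Finset.univ := by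
    apply Finset.filter_true_of_mem
    intro k _
    omega
  rw [e0, efil] at hfin
  exact hfin

lemma gd_con (hn : 1 ≤ n) (T : Ω → Ω) (lam : ℝ) (hlam0 : 0 ≤ lam)
    (hT : ∀ x : Fin (n + 1) → Ω,
      g (fun i => T (x i)) ≤ (lam / n) *
        ((insert (g x) (Finset.image
            (fun p : Fin (n + 1) × Fin (n + 1) =>
              g (fun k => if k.val = 0 then x p.1 else T (x p.2)))
            Finset.univ)).max' (Finset.insert_nonempty _ _)))
    (a b : Ω) :
    g (Fin.cons (T a) fun _ => T b) ≤ (lam / n) *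
      (max (max (max (g (Fin.cons a fun _ => b)) (g (Fin.cons a fun _ => T a)))
        (max (g (Fin.cons a fun _ => T b)) (g (Fin.cons b fun _ => T a))))
        (g (Fin.cons b fun _ => T b))) := by
  have h := hT (Fin.cons a fun _ => b)
  have e1 : (fun i : Fin (n+1) => T ((Fin.cons a (fun _ => b) : Fin (n+1) → Ω) i))
      = Fin.cons (T a) fun _ => T b := by
    funext i
    cases i using Fin.cases with
    | zero => simp
    | succ j => simp
  rw [e1] at h
  refine h.trans (mul_le_mul_of_nonneg_left ?_ (div_nonneg hlam0 (Nat.cast_nonneg n)))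
  apply Finset.max'_le
  intro y hy
  rcases Finset.mem_insert.mp hy with rfl | hy
  · exact le_max_of_le_left (le_max_of_le_left (le_max_left _ _))
  · obtain ⟨p, -, rfl⟩ := Finset.mem_image.mp hy
    have e2 : (fun k : Fin (n+1) => if k.val = 0
          then (Fin.cons a (fun _ => b) : Fin (n+1) → Ω) p.1
          else T ((Fin.cons a (fun _ => b) : Fin (n+1) → Ω) p.2))
        = Fin.cons ((Fin.cons a (fun _ => b) : Fin (n+1) → Ω) p.1)
            (fun _ => T ((Fin.cons a (fun _ => b) : Fin (n+1) → Ω) p.2)) := by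
      funext i
      cases i using Fin.cases with
      | zero => simp
      | succ j => simp
    rw [e2]
    have hcv : ∀ i : Fin (n+1), (Fin.cons a (fun _ => b) : Fin (n+1) → Ω) i = a ∨
        (Fin.cons a (fun _ => b) : Fin (n+1) → Ω) i = b := by
      intro i
      cases i using Fin.cases with
      | zero => exact Or.inl rfl
      | succ j => exact Or.inr rfl
    rcases hcv p.1 with h1 | h1 <;> rcases hcv p.2 with h2 | h2 <;> rw [h1, h2]
    · exact le_max_of_le_left (le_max_of_le_left (le_max_right _ _))
    · exact le_max_of_le_left (le_max_of_le_right (le_max_left _ _))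
    · exact le_max_of_le_left (le_max_of_le_right (le_max_right _ _))
    · exact le_max_right _ _

end gaux



section quasi
variable {Ω : Type*}

/-- The Ćirić five-term maximum. -/
def mx5 (d : Ω → Ω → ℝ) (T : Ω → Ω) (a b : Ω) : ℝ :=
  max (max (max (d a b) (d a (T a))) (max (d a (T b)) (d b (T a)))) (d b (T b))

lemma orbit_bound (d : Ω → Ω → ℝ) (T : Ω → Ω) (n : ℕ) (μ : ℝ)
    (hpos : ∀ a b, 0 ≤ d a b)
    (h0 : ∀ a, d a a = 0)
    (htri : ∀ a b c, d a c ≤ d a b + d b c)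
    (hsym : ∀ a b, d a b ≤ n * d b a)
    (hcon : ∀ a b, d (T a) (T b) ≤ μ * mx5 d T a b)
    (hμ0 : 0 ≤ μ) (hlm : (n : ℝ) * μ < 1) (hn : 1 ≤ n) (x : Ω) :
    ∀ i j, d (T^[i] x) (T^[j] x) ≤ n * d x (T x) / (1 - n * μ) := by
  have hn' : (1 : ℝ) ≤ n := by exact_mod_cast hn
  have hμ1 : μ < 1 := lt_of_le_of_lt (le_mul_of_one_le_left hμ0 hn') hlm
  have hd0 : 0 ≤ d x (T x) := hpos _ _
  have hden : 0 < 1 - (n : ℝ) * μ := by linarith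
  have hB0 : 0 ≤ n * d x (T x) / (1 - n * μ) :=
    div_nonneg (mul_nonneg (Nat.cast_nonneg n) hd0) hden.le
  have key : ∀ N i j, i ≤ N → j ≤ N →
      d (T^[i] x) (T^[j] x) ≤ n * d x (T x) / (1 - n * μ) := by
    intro N
    set s : Finset (ℕ × ℕ) := (Finset.range (N+1)) ×ˢ (Finset.range (N+1)) with hs
    have hne : s.Nonempty := ⟨(0,0), by simp [hs]⟩
    set Δ := s.sup' hne (fun q => d (T^[q.1] x) (T^[q.2] x)) with hΔ
    have hle : ∀ i j, i ≤ N → j ≤ N → d (T^[i] x) (T^[j] x) ≤ Δ := by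
      intro i j hi hj
      exact Finset.le_sup' (f := fun q : ℕ × ℕ => d (T^[q.1] x) (T^[q.2] x))
        (by simp [hs]; omega : (i, j) ∈ s)
    have hΔ0 : 0 ≤ Δ := le_trans (by rw [h0]) (hle 0 0 (by omega) (by omega))
    have hstep : ∀ i j, 1 ≤ i → i ≤ N → 1 ≤ j → j ≤ N →
        d (T^[i] x) (T^[j] x) ≤ μ * Δ := by
      intro i j hi1 hiN hj1 hjN
      obtain ⟨i', rfl⟩ : ∃ i', i = i' + 1 := ⟨i - 1, by omega⟩
      obtain ⟨j', rfl⟩ : ∃ j', j = j' + 1 := ⟨j - 1, by omega⟩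
      rw [Function.iterate_succ_apply', Function.iterate_succ_apply']
      refine (hcon _ _).trans ?_
      apply mul_le_mul_of_nonneg_left _ hμ0
      unfold mx5
      rw [← Function.iterate_succ_apply' T i', ← Function.iterate_succ_apply' T j']
      apply max_le (max_le (max_le _ _) (max_le _ _)) _ <;>
        apply hle <;> omega
    have hΔB : Δ ≤ n * d x (T x) / (1 - n * μ) := by
      obtain ⟨q, hq, hqΔ⟩ := Finset.exists_mem_eq_sup' hne
        (fun q : ℕ × ℕ => d (T^[q.1] x) (T^[q.2] x))
      rw [← hΔ] at hqΔ
      have hq1 : q.1 ≤ N := by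
        simp [hs] at hq; omega
      have hq2 : q.2 ≤ N := by
        simp [hs] at hq; omega
      rw [le_div_iff₀ hden]
      have h01 : d (T^[0] x) (T^[1] x) = d x (T x) := by simp
      rcases Nat.eq_zero_or_pos q.1 with hq10 | hq1p
      · rcases Nat.eq_zero_or_pos q.2 with hq20 | hq2p
        · have he : Δ = 0 := by rw [hqΔ, hq10, hq20]; simp [h0]
          nlinarith
        · have he : Δ = d (T^[0] x) (T^[q.2] x) := by rw [hqΔ, hq10]
          have h2 : d (T^[1] x) (T^[q.2] x) ≤ μ * Δ := hstep 1 q.2 le_rfl (by omega) hq2p hq2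
          have h7 : Δ ≤ d x (T x) + μ * Δ := by
            calc Δ = d (T^[0] x) (T^[q.2] x) := he
            _ ≤ d (T^[0] x) (T^[1] x) + d (T^[1] x) (T^[q.2] x) := htri _ _ _
            _ ≤ d x (T x) + μ * Δ := add_le_add (le_of_eq h01) h2
          nlinarith [mul_nonneg (mul_nonneg (sub_nonneg.mpr hn') hμ0) hΔ0,
            mul_nonneg (sub_nonneg.mpr hn') hd0]
      · rcases Nat.eq_zero_or_pos q.2 with hq20 | hq2p
        · have he : Δ = d (T^[q.1] x) (T^[0] x) := by rw [hqΔ, hq20]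
          have h3 : d (T^[1] x) (T^[q.1] x) ≤ μ * Δ := hstep 1 q.1 le_rfl (by omega) hq1p hq1
          have h5 : d (T^[0] x) (T^[q.1] x) ≤ d x (T x) + μ * Δ := by
            calc d (T^[0] x) (T^[q.1] x)
                ≤ d (T^[0] x) (T^[1] x) + d (T^[1] x) (T^[q.1] x) := htri _ _ _
            _ ≤ d x (T x) + μ * Δ := add_le_add (le_of_eq h01) h3
          have h7 : Δ ≤ (n : ℝ) * (d x (T x) + μ * Δ) := by
            calc Δ = d (T^[q.1] x) (T^[0] x) := he
            _ ≤ (n : ℝ) * d (T^[0] x) (T^[q.1] x) := hsym _ _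
            _ ≤ (n : ℝ) * (d x (T x) + μ * Δ) :=
                mul_le_mul_of_nonneg_left h5 (Nat.cast_nonneg n)
          nlinarith [h7]
        · have h1 := hstep q.1 q.2 hq1p hq1 hq2p hq2
          rw [← hqΔ] at h1
          have h8 : Δ ≤ 0 := by nlinarith
          nlinarith
    intro i j hi hj
    exact (hle i j hi hj).trans hΔB
  intro i j
  exact key (max i j) i j (le_max_left _ _) (le_max_right _ _)

lemma orbit_decay (d : Ω → Ω → ℝ) (T : Ω → Ω) (n : ℕ) (μ : ℝ)
    (hpos : ∀ a b, 0 ≤ d a b)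
    (h0 : ∀ a, d a a = 0)
    (htri : ∀ a b c, d a c ≤ d a b + d b c)
    (hsym : ∀ a b, d a b ≤ n * d b a)
    (hcon : ∀ a b, d (T a) (T b) ≤ μ * mx5 d T a b)
    (hμ0 : 0 ≤ μ) (hlm : (n : ℝ) * μ < 1) (hn : 1 ≤ n) (x : Ω) :
    ∀ m i j, m ≤ i → m ≤ j →
      d (T^[i] x) (T^[j] x) ≤ μ ^ m * (n * d x (T x) / (1 - n * μ)) := by
  intro m
  induction m with
  | zero =>
    intro i j _ _
    simpa using orbit_bound d T n μ hpos h0 htri hsym hcon hμ0 hlm hn x i j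
  | succ m ih =>
    intro i j hi hj
    obtain ⟨i', rfl⟩ : ∃ i', i = i' + 1 := ⟨i - 1, by omega⟩
    obtain ⟨j', rfl⟩ : ∃ j', j = j' + 1 := ⟨j - 1, by omega⟩
    rw [Function.iterate_succ_apply', Function.iterate_succ_apply']
    refine (hcon _ _).trans ?_
    have hmx : mx5 d T (T^[i'] x) (T^[j'] x) ≤ μ ^ m * (n * d x (T x) / (1 - n * μ)) := by
      unfold mx5
      rw [← Function.iterate_succ_apply' T i', ← Function.iterate_succ_apply' T j']
      apply max_le (max_le (max_le _ _) (max_le _ _)) _ <;> apply ih <;> omega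
    calc μ * mx5 d T (T^[i'] x) (T^[j'] x) ≤ μ * (μ ^ m * (n * d x (T x) / (1 - n * μ))) :=
          mul_le_mul_of_nonneg_left hmx hμ0
    _ = μ ^ (m+1) * (n * d x (T x) / (1 - n * μ)) := by ring
end quasi


set_option maxHeartbeats 1000000 in
/-- Ćirić fixed point theorem in a g-metric space: a g-quasi-contraction on a
T-orbitally g-complete g-metric space has a unique fixed point `y`, the iterates
g-converge to `y`, and the convergence rate estimate holds. -/
theorem gMetric_ciric {Ω : Type*} [Nonempty Ω] {n : ℕ} (hn : 1 ≤ n)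
    (g : (Fin (n + 1) → Ω) → ℝ) (hg : IsGMetric n g) (T : Ω → Ω)
    (horbital : ∀ (x : Ω) (xseq : ℕ → Ω),
      (∀ k : ℕ, ∃ N : ℕ, xseq k = T^[N] x) → GCauchy g xseq → ∃ y : Ω, GConv g xseq y)
    (lam : ℝ) (hlam0 : 0 ≤ lam) (hlam1 : lam < 1)
    (hT : ∀ x : Fin (n + 1) → Ω,
      g (fun i => T (x i)) ≤ (lam / n) *
        ((insert (g x) (Finset.image
            (fun p : Fin (n + 1) × Fin (n + 1) =>
              g (fun k => if k.val = 0 then x p.1 else T (x p.2)))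
            Finset.univ)).max' (Finset.insert_nonempty _ _))) :
    ∃ y : Ω, T y = y ∧ (∀ z : Ω, T z = z → z = y) ∧
      (∀ x : Ω, GConv g (fun N => T^[N] x) y) ∧
      (∀ (x : Ω) (N : ℕ), 1 ≤ N →
        g (Fin.cons (T^[N] x) fun _ => y) ≤
          (lam ^ N / ((n : ℝ) ^ (N - 1) * (1 - lam))) * g (Fin.cons x fun _ => T x)) := by
  classical
  have hnpos : (0:ℝ) < n := by exact_mod_cast hn
  have hnne : (n:ℝ) ≠ 0 := ne_of_gt hnpos
  have hfield : (n:ℝ) * (lam / n) = lam := by field_simp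
  have hμ0 : 0 ≤ lam / n := div_nonneg hlam0 (Nat.cast_nonneg n)
  have hμ1 : lam / n < 1 := by
    rw [div_lt_one hnpos]
    have : (1:ℝ) ≤ n := by exact_mod_cast hn
    linarith
  have hlamlt : (0:ℝ) < 1 - lam := by linarith
  set d : Ω → Ω → ℝ := fun a b => g (Fin.cons a fun _ => b) with hd
  have hpos : ∀ a b, 0 ≤ d a b := fun a b => hg.nonneg _
  have hdd0 : ∀ a, d a a = 0 := fun a => gd_self hg a
  have hdeq : ∀ a b, d a b = 0 → a = b := fun a b h => gd_eq hg hn h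
  have hdtri : ∀ a b c, d a c ≤ d a b + d b c := fun a b c => gd_tri hg hn a b c
  have hdsym : ∀ a b, d a b ≤ n * d b a := fun a b => gd_symm hg hn a b
  have hdcon : ∀ a b, d (T a) (T b) ≤ (lam / n) * mx5 d T a b := by
    intro a b
    have h := gd_con hn T lam hlam0 hT a b
    simpa [mx5, hd] using h
  have hnμlt : (n:ℝ) * (lam / n) < 1 := by rw [hfield]; exact hlam1
  -- the per-point key statement
  have key : ∀ x : Ω, ∃ y : Ω, T y = y ∧ GConv g (fun N => T^[N] x) y ∧
      ∀ N : ℕ, d (T^[N] x) y ≤ (lam/n)^N * ((n:ℝ) * d x (T x) / (1 - lam)) := by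
    intro x
    have hdec := orbit_decay d T n (lam/n) hpos hdd0 hdtri hdsym hdcon hμ0 hnμlt hn x
    rw [hfield] at hdec
    set B : ℝ := (n:ℝ) * d x (T x) / (1 - lam) with hB
    have hB0 : 0 ≤ B := div_nonneg (mul_nonneg (Nat.cast_nonneg n) (hpos _ _)) hlamlt.le
    have hten : Filter.Tendsto (fun N : ℕ => (lam/n)^N) Filter.atTop (nhds 0) :=
      tendsto_pow_atTop_nhds_zero_of_lt_one hμ0 hμ1
    have hcauchy : GCauchy g (fun N => T^[N] x) := by
      intro ε hε
      have hC : (0:ℝ) < ((n:ℝ)+1) * B + 1 := by positivity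
      obtain ⟨N, hN⟩ := (hten.eventually
        (gt_mem_nhds (show (0:ℝ) < ε / (((n:ℝ)+1) * B + 1) from div_pos hε hC))).exists
      refine ⟨N, fun idx hidx => ?_⟩
      have hp0 : 0 ≤ (lam/n)^N := pow_nonneg hμ0 N
      calc g (fun k => T^[idx k] x)
          ≤ ∑ k : Fin (n+1), g (Fin.cons (T^[idx k] x) fun _ => T^[N] x) :=
            gd_sum hg hn _ _
        _ ≤ ∑ _k : Fin (n+1), ((lam/n)^N * B) :=
            Finset.sum_le_sum (fun k _ => hdec N (idx k) N (hidx k) le_rfl)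
        _ = ((n:ℝ)+1) * ((lam/n)^N * B) := by
            rw [Finset.sum_const, Finset.card_univ, Fintype.card_fin, nsmul_eq_mul]
            push_cast
            ring
        _ ≤ (lam/n)^N * (((n:ℝ)+1) * B + 1) := by nlinarith
        _ < ε := (lt_div_iff₀ hC).mp hN
    obtain ⟨y, hy⟩ := horbital x (fun N => T^[N] x) (fun k => ⟨k, rfl⟩) hcauchy
    have hconv : ∀ ε : ℝ, 0 < ε → ∃ N, ∀ m, N ≤ m → d y (T^[m] x) < ε := by
      intro ε hε
      obtain ⟨N, hN⟩ := hy ε hε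
      exact ⟨N, fun m hm => hN (fun _ => m) (fun _ => hm)⟩
    -- fixed point
    have hfix : T y = y := by
      have hle' : ∀ ε : ℝ, 0 < ε → d (T y) y ≤ ε := by
        intro ε hε
        set K : ℝ := (lam/n)/(1-lam) + (n:ℝ) + 1 with hK
        have hK0 : (0:ℝ) < K := by
          have : 0 ≤ (lam/n)/(1-lam) := div_nonneg hμ0 hlamlt.le
          positivity
        set δ : ℝ := ε / K with hδ
        have hδ0 : 0 < δ := div_pos hε hK0
        obtain ⟨N₁, hN₁⟩ := hconv δ hδ0
        obtain ⟨N₂, hN₂⟩ : ∃ N₂ : ℕ, (lam/n)^N₂ * B < δ := by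
          have hC : (0:ℝ) < B + 1 := by linarith
          obtain ⟨N₂, hN₂⟩ := (hten.eventually
            (gt_mem_nhds (show (0:ℝ) < δ / (B+1) from div_pos hδ0 hC))).exists
          refine ⟨N₂, ?_⟩
          have hp0 : 0 ≤ (lam/n)^N₂ := pow_nonneg hμ0 N₂
          have := (lt_div_iff₀ hC).mp hN₂
          nlinarith
        set m := max N₁ N₂ with hm
        have e1 : d y (T^[m] x) < δ := hN₁ m (le_max_left _ _)
        have e2 : d y (T^[m+1] x) < δ := hN₁ (m+1) ((le_max_left N₁ N₂).trans (Nat.le_succ m))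
        have e3 : d (T^[m] x) (T^[m+1] x) < δ := by
          have h1 : d (T^[m] x) (T^[m+1] x) ≤ (lam/n)^m * B :=
            hdec m m (m+1) le_rfl (by omega)
          have h2 : (lam/n)^m ≤ (lam/n)^N₂ :=
            pow_le_pow_of_le_one hμ0 hμ1.le (le_max_right _ _)
          nlinarith
        set a : ℝ := d (T y) (T^[m+1] x) with ha
        have ha0 : 0 ≤ a := hpos _ _
        have hna : 0 ≤ (n:ℝ) * a := mul_nonneg (Nat.cast_nonneg n) ha0
        have hbound : a ≤ (lam/n) * (δ + (n:ℝ) * a) := by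
          have h := hdcon y (T^[m] x)
          rw [← Function.iterate_succ_apply' T m x] at h
          refine h.trans (mul_le_mul_of_nonneg_left ?_ hμ0)
          unfold mx5
          rw [← Function.iterate_succ_apply' T m x]
          have t2 : d y (T y) ≤ δ + (n:ℝ) * a := by
            calc d y (T y) ≤ d y (T^[m+1] x) + d (T^[m+1] x) (T y) := hdtri _ _ _
            _ ≤ δ + (n:ℝ) * a := add_le_add e2.le (hdsym _ _)
          have t4 : d (T^[m] x) (T y) ≤ δ + (n:ℝ) * a := by
            calc d (T^[m] x) (T y)
                ≤ d (T^[m] x) (T^[m+1] x) + d (T^[m+1] x) (T y) := hdtri _ _ _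
            _ ≤ δ + (n:ℝ) * a := add_le_add e3.le (hdsym _ _)
          apply max_le (max_le (max_le _ _) (max_le _ _)) _ <;> linarith
        -- a ≤ μ δ + lam * a  ⟹ a ≤ μδ/(1-lam)
        have hμn : (lam/n) * ((n:ℝ) * a) = lam * a := by
          rw [← mul_assoc, mul_comm (lam/n) (n:ℝ), hfield]
        have ha2 : a * (1 - lam) ≤ (lam/n) * δ := by nlinarith [hbound, hμn]
        have hfin : d (T y) y ≤ a + (n:ℝ) * δ := by
          calc d (T y) y ≤ d (T y) (T^[m+1] x) + d (T^[m+1] x) y := hdtri _ _ _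
          _ ≤ a + (n:ℝ) * d y (T^[m+1] x) := add_le_add le_rfl (hdsym _ _)
          _ ≤ a + (n:ℝ) * δ := by nlinarith [e2, hnpos]
        have haf : a ≤ (lam/n)/(1-lam) * δ := by
          rw [div_mul_eq_mul_div, le_div_iff₀ hlamlt]
          linarith
        have : d (T y) y ≤ K * δ - δ := by
          rw [hK]
          nlinarith [haf, hfin, hδ0, Nat.cast_nonneg (α := ℝ) n]
        have hKδ : K * δ = ε := by
          rw [hδ]
          field_simp
        linarith
      have h0' : d (T y) y ≤ 0 := by
        by_contra hcon'
        push_neg at hcon'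
        have := hle' (d (T y) y / 2) (by linarith)
        linarith
      exact hdeq _ _ (le_antisymm h0' (hpos _ _))
    -- rate
    have hrate : ∀ N : ℕ, d (T^[N] x) y ≤ (lam/n)^N * B := by
      intro N
      have hstep : ∀ ε : ℝ, 0 < ε → d (T^[N] x) y ≤ (lam/n)^N * B + ε := by
        intro ε hε
        obtain ⟨N₁, hN₁⟩ := hconv (ε / n) (div_pos hε hnpos)
        set m := max N N₁ with hm
        calc d (T^[N] x) y ≤ d (T^[N] x) (T^[m] x) + d (T^[m] x) y := hdtri _ _ _
        _ ≤ (lam/n)^N * B + (n:ℝ) * d y (T^[m] x) :=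
            add_le_add (hdec N N m le_rfl (le_max_left _ _)) (hdsym _ _)
        _ ≤ (lam/n)^N * B + (n:ℝ) * (ε / n) := by
            have := hN₁ m (le_max_right _ _)
            nlinarith
        _ = (lam/n)^N * B + ε := by
            rw [mul_div_cancel₀ _ hnne]
      exact le_of_forall_pos_le_add hstep
    exact ⟨y, hfix, hy, hrate⟩
  -- assemble
  obtain ⟨y0, hy0fix, -, -⟩ := key (Classical.arbitrary Ω)
  have huniq : ∀ z : Ω, T z = z → z = y0 := by
    intro z hz
    set M : ℝ := max (d z y0) (d y0 z) with hM
    have hM0 : 0 ≤ M := le_trans (hpos z y0) (le_max_left _ _)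
    have hbd : ∀ u v : Ω, T u = u → T v = v → mx5 d T u v ≤ max (d u v) (d v u) := by
      intro u v hu hv
      unfold mx5
      rw [hu, hv, hdd0, hdd0]
      have h1 : 0 ≤ max (d u v) (d v u) := le_trans (hpos u v) (le_max_left _ _)
      apply max_le (max_le (max_le _ _) (max_le _ _)) _ <;>
        simp [le_max_left, le_max_right, h1]
    have h1 : d z y0 ≤ (lam/n) * M := by
      have h := hdcon z y0
      rw [hz, hy0fix] at h
      exact h.trans (mul_le_mul_of_nonneg_left (hbd z y0 hz hy0fix) hμ0)
    have h2 : d y0 z ≤ (lam/n) * M := by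
      have h := hdcon y0 z
      rw [hz, hy0fix] at h
      refine h.trans (mul_le_mul_of_nonneg_left ((hbd y0 z hy0fix hz).trans ?_) hμ0)
      rw [hM, max_comm]
    have hMle : M ≤ (lam/n) * M := max_le h1 h2
    have hMz : M ≤ 0 := by nlinarith
    have : d z y0 = 0 := le_antisymm (le_trans (le_max_left _ _) hMz) (hpos _ _)
    exact hdeq _ _ this
  refine ⟨y0, hy0fix, huniq, ?_, ?_⟩
  · intro x
    obtain ⟨y, hyfix, hconv, -⟩ := key x
    rwa [huniq y hyfix] at hconv
  · intro x N hN1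
    obtain ⟨y, hyfix, -, hrate⟩ := key x
    have := hrate N
    rw [huniq y hyfix] at this
    obtain ⟨M, rfl⟩ : ∃ M, N = M + 1 := ⟨N - 1, by omega⟩
    have halg : (lam/n)^(M+1) * ((n:ℝ) * d x (T x) / (1 - lam))
        = lam^(M+1) / ((n:ℝ)^(M+1-1) * (1-lam)) * d x (T x) := by
      simp only [Nat.add_sub_cancel]
      rw [div_pow]
      field_simp
      ring
    rw [halg] at this
    exact this
end
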